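/- Let 𝔖 = {(A_ξ, F_ξ, 𝔅_ξ)}_{ξ∈W} be a tower of permutations and suppose there is a countable subset C' ⊆ W that is cofinal in W (for every ξ ∈ W there is ζ ∈ C' with ξ ≤ ζ). Then ℚ(𝔖) has a σ-centred dense subset: there is a dense D ⊆ ℚ(𝔖) that is a countable union of sets D_n such that every finite subset of each D_n has a common upper bound in ℚ(𝔖). -/

import Mathlib

/-- A finite subalgebra of the Boolean algebra `𝒫(ℕ)` of subsets of `ℕ`. -/
def IsFiniteSubalgebra (𝔅 : Set (Set ℕ)) : Prop :=
  𝔅.Finite ∧ ∅ ∈ 𝔅 ∧ Set.univ ∈ 𝔅 ∧ (∀ X ∈ 𝔅, Xᶜ ∈ 𝔅) ∧ ∀ X ∈ 𝔅, ∀ Y ∈ 𝔅, X ∪ Y ∈ 𝔅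

/-- A tower of permutations `𝔖 = {(A_ξ, F_ξ, 𝔅_ξ)}_{ξ ∈ W}` indexed by a set `W`
of ordinals. -/
structure Tower (W : Set Ordinal) where
  /-- the sets `A_ξ` -/
  A : Ordinal → Set ℕ
  /-- the permutations `F_ξ` of `ℕ` -/
  F : Ordinal → (ℕ → ℕ)
  /-- the finite subalgebras `𝔅_ξ` -/
  Alg : Ordinal → Set (Set ℕ)
  A_inf : ∀ ξ ∈ W, (A ξ).Infinite
  F_bij : ∀ ξ ∈ W, Function.Bijective (F ξ)
  F_seg : ∀ ξ ∈ W, ∀ m ∈ A ξ, Set.BijOn (F ξ) (Set.Iio m) (Set.Iio m)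
  Alg_fin : ∀ ξ ∈ W, IsFiniteSubalgebra (Alg ξ)
  Alg_mono : ∀ ξ ∈ W, ∀ ζ ∈ W, ξ < ζ → Alg ξ ⊆ Alg ζ
  A_ae_sub : ∀ ξ ∈ W, ∀ ζ ∈ W, ξ < ζ → (A ζ \ A ξ).Finite
  F_ae_eq : ∀ ξ ∈ W, ∀ ζ ∈ W, ξ < ζ → ∀ B ∈ Alg ξ,
    (symmDiff (F ζ '' B) (F ξ '' B)).Finite

/-- A condition `p = (a^p, f^p, α^p, 𝔅^p)` in the forcing `ℚ(𝔖)`.  The finite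
partial function `f^p` (whose domain is `{0, …, max(a^p) − 1}`) is modelled as a
total function on `ℕ` which is the identity from `max(a^p)` onwards. -/
structure QCond {W : Set Ordinal} (S : Tower W) where
  /-- the finite nonempty set `a^p` -/
  a : Finset ℕ
  /-- the finite partial permutation `f^p` -/
  f : ℕ → ℕ
  /-- the ordinal `α^p ∈ W` -/
  α : Ordinal
  /-- the finite subalgebra `𝔅^p` -/
  Alg : Set (Set ℕ)
  a_ne : a.Nonempty
  f_seg : ∀ m ∈ a, Set.BijOn f (Set.Iio m) (Set.Iio m)
  f_pad : ∀ i, a.max' a_ne ≤ i → f i = i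
  α_mem : α ∈ W
  max_mem : a.max' a_ne ∈ S.A α
  Alg_fin : IsFiniteSubalgebra Alg

namespace QCond

variable {W : Set Ordinal} {S : Tower W}

/-- `max (a^p)`. -/
def top (p : QCond S) : ℕ := p.a.max' p.a_ne

/-- The order `p ≤ q` on `ℚ(𝔖)`. -/
def le (p q : QCond S) : Prop :=
  p.a ⊆ q.a ∧
  q.a.filter (fun n => n ≤ p.top) = p.a ∧
  (∀ i, i < p.top → q.f i = p.f i) ∧
  p.Alg ⊆ q.Alg ∧
  p.α ≤ q.α ∧
  ({n : ℕ | n ∈ S.A q.α ∧ q.top ≤ n} ∪ ((↑q.a : Set ℕ) \ ↑p.a)) ⊆ S.A p.α ∧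
  ∀ B ∈ p.Alg ∩ S.Alg p.α,
    (∀ m ∈ q.a, ∀ n ∈ q.a, p.top ≤ m → m < n →
      q.f '' (B ∩ Set.Ico m n) = S.F p.α '' (B ∩ Set.Ico m n)) ∧
    (∀ m ∈ S.A q.α, ∀ n ∈ S.A q.α, q.top ≤ m → m < n →
      S.F q.α '' (B ∩ Set.Ico m n) = S.F p.α '' (B ∩ Set.Ico m n))

/-- A subset `D ⊆ ℚ(𝔖)` is dense. -/
def IsDense (D : Set (QCond S)) : Prop := ∀ p : QCond S, ∃ q ∈ D, le p q

/-- Two conditions are compatible. -/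
def Compatible (p q : QCond S) : Prop := ∃ r : QCond S, le p r ∧ le q r

end QCond

/-!
Every condition `p` can be moved to a condition with ordinal `ζ ∈ C'`, `ζ ≥ α^p`: choose `n₀ > max a^p`
in `A_ζ` so large that above `n₀` the set `A_ζ` lies inside `A_{α^p}` and `F_ζ`, `F_{α^p}` move every
`B ∈ 𝔅^p ∩ 𝔅_{α^p}` the same way, add `n₀` to `a^p`, and extend `f^p` by `F_{α^p}` on `[max a^p, n₀)`.
So the conditions with ordinal in `C'` are dense. Since `a^p` and `f^p` are finite objects and `C'` is
countable, these conditions fall into countably many classes with the same `(a, f, α)`, and finitely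
many conditions of one class are all below that triple equipped with a finite algebra containing all
their algebras.
-/

open Filter Set

theorem exists_isFiniteSubalgebra_superset {G : Set (Set ℕ)} (hG : G.Finite) :
    ∃ 𝔅, IsFiniteSubalgebra 𝔅 ∧ G ⊆ 𝔅 := by
  -- `φ n` records which members of `G` contain `n`; take the sets that are unions of fibres of `φ`.
  set φ : ℕ → Set (Set ℕ) := fun n => {X ∈ G | n ∈ X}
  have hφ : (range φ).Finite :=
    hG.finite_subsets.subset (by rintro _ ⟨n, rfl⟩ X hX; exact hX.1)
  refine ⟨range (preimage φ), ⟨?_, ⟨∅, preimage_empty⟩, ⟨univ, preimage_univ⟩, ?_, ?_⟩, ?_⟩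
  · refine (hφ.powerset.image (preimage φ)).subset ?_
    rintro _ ⟨T, rfl⟩
    exact ⟨T ∩ range φ, inter_subset_right, preimage_inter_range⟩
  · rintro _ ⟨T, rfl⟩
    exact ⟨Tᶜ, preimage_compl⟩
  · rintro _ ⟨T, rfl⟩ _ ⟨T', rfl⟩
    exact ⟨T ∪ T', preimage_union⟩
  · intro X hX
    exact ⟨{s | X ∈ s}, by ext n; simp [φ, hX]⟩

section Segments

variable {F : ℕ → ℕ} {m n : ℕ}

theorem Set.BijOn.Ico_of_Iio (hm : BijOn F (Iio m) (Iio m)) (hn : BijOn F (Iio n) (Iio n))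
    (hmn : m ≤ n) : BijOn F (Ico m n) (Ico m n) := by
  have hIco : Ico m n = Iio n \ Iio m := by ext; simp
  have h := (hn.injOn.mono (sdiff_subset : Iio n \ Iio m ⊆ Iio n)).bijOn_image
  rwa [hn.injOn.image_sdiff_subset (Iio_subset_Iio hmn), hn.image_eq, hm.image_eq, ← hIco] at h

theorem image_inter_Ico_of_bijOn_Iio (hF : Function.Injective F) (hm : BijOn F (Iio m) (Iio m))
    (hn : BijOn F (Iio n) (Iio n)) (hmn : m ≤ n) (B : Set ℕ) :
    F '' (B ∩ Ico m n) = F '' B ∩ Ico m n := by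
  rw [image_inter hF, (hm.Ico_of_Iio hn hmn).image_eq]

def splice (f F : ℕ → ℕ) (t n : ℕ) : ℕ → ℕ :=
  fun i => if i < t then f i else if i < n then F i else i

theorem eqOn_splice_Ico (f F : ℕ → ℕ) (t n : ℕ) : EqOn (splice f F t n) F (Ico t n) :=
  fun _ hi => by simp [splice, not_lt.2 hi.1, hi.2]

theorem bijOn_splice {f : ℕ → ℕ} {t : ℕ} (hf : BijOn f (Iio t) (Iio t))
    (hFt : BijOn F (Iio t) (Iio t)) (hFn : BijOn F (Iio n) (Iio n)) (htn : t ≤ n) :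
    BijOn (splice f F t n) (Iio n) (Iio n) := by
  have hlow : BijOn (splice f F t n) (Iio t) (Iio t) :=
    hf.congr fun i hi => (if_pos hi).symm
  have hhigh : BijOn (splice f F t n) (Ico t n) (Ico t n) :=
    (hFt.Ico_of_Iio hFn htn).congr (eqOn_splice_Ico f F t n).symm
  have hdisj : Disjoint (Iio t) (Ico t n) :=
    disjoint_left.2 fun _ hi hi' => (not_lt.2 hi'.1) hi
  rw [← Iio_union_Ico_eq_Iio htn]
  refine hlow.union hhigh ((injOn_union hdisj).2 ⟨hlow.injOn, hhigh.injOn, ?_⟩)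
  intro x hx y hy hxy
  exact disjoint_left.1 hdisj (hlow.mapsTo hx) (hxy ▸ hhigh.mapsTo hy)

end Segments

namespace Tower

variable {W : Set Ordinal} (S : Tower W) {ξ ζ : Ordinal}

theorem eventually_mem_A_of_mem (hξ : ξ ∈ W) (hζ : ζ ∈ W) (hle : ξ ≤ ζ) :
    ∀ᶠ n in atTop, n ∈ S.A ζ → n ∈ S.A ξ := by
  rcases hle.eq_or_lt with rfl | hlt
  · exact Eventually.of_forall fun _ => id
  · rw [← Nat.cofinite_eq_atTop]
    filter_upwards [(S.A_ae_sub ξ hξ ζ hζ hlt).eventually_cofinite_notMem] with n hn hnζ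
    by_contra hnξ
    exact hn ⟨hnζ, hnξ⟩

theorem eventually_mem_image_F_iff (hξ : ξ ∈ W) (hζ : ζ ∈ W) (hle : ξ ≤ ζ) {B : Set ℕ}
    (hB : B ∈ S.Alg ξ) : ∀ᶠ k in atTop, (k ∈ S.F ζ '' B ↔ k ∈ S.F ξ '' B) := by
  rcases hle.eq_or_lt with rfl | hlt
  · exact Eventually.of_forall fun _ => Iff.rfl
  · rw [← Nat.cofinite_eq_atTop]
    filter_upwards [(S.F_ae_eq ξ hξ ζ hζ hlt B hB).eventually_cofinite_notMem] with k hk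
    rw [mem_symmDiff] at hk
    tauto

end Tower

namespace QCond

variable {W : Set Ordinal} {S : Tower W}

theorem le_top_of_mem (p : QCond S) {x : ℕ} (hx : x ∈ p.a) : x ≤ p.top :=
  p.a.le_max' x hx

theorem top_eq_of_a_eq {p q : QCond S} (ha : p.a = q.a) : p.top = q.top := by
  unfold top
  congr 1

theorem f_eq_of_eqOn_Iio_top {p q : QCond S} (ha : p.a = q.a)
    (hf : ∀ i < p.top, p.f i = q.f i) : p.f = q.f := by
  funext i
  by_cases hi : i < p.top
  · exact hf i hi
  · have hq : q.top ≤ i := top_eq_of_a_eq ha ▸ not_lt.1 hi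
    rw [p.f_pad i (not_lt.1 hi), q.f_pad i hq]

theorem le_of_eq_of_Alg_subset {p q : QCond S} (ha : p.a = q.a) (hf : p.f = q.f) (hα : p.α = q.α)
    (hAlg : p.Alg ⊆ q.Alg) : le p q := by
  have htop := top_eq_of_a_eq ha
  refine ⟨ha.subset, ?_, fun i _ => by rw [hf], hAlg, hα.le, ?_, fun B _ => ⟨?_, ?_⟩⟩
  · rw [← ha]
    exact Finset.filter_true_of_mem fun x hx => p.le_top_of_mem hx
  · rintro n (⟨hn, -⟩ | ⟨hq, hp⟩)
    · exact hα ▸ hn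
    · exact absurd (ha ▸ hq) hp
  · intro m _ n hn hpm hmn
    have := q.le_top_of_mem hn
    omega
  · intro m _ n _ _ _
    rw [hα]

theorem exists_threshold (p : QCond S) {ζ : Ordinal} (hζ : ζ ∈ W) (hle : p.α ≤ ζ) :
    ∃ n₀, p.top < n₀ ∧ n₀ ∈ S.A ζ ∧ ∀ n, n₀ ≤ n → (n ∈ S.A ζ → n ∈ S.A p.α) ∧
      ∀ B ∈ p.Alg ∩ S.Alg p.α, (n ∈ S.F ζ '' B ↔ n ∈ S.F p.α '' B) := by
  have hF : ∀ᶠ n in atTop, ∀ B ∈ p.Alg ∩ S.Alg p.α, (n ∈ S.F ζ '' B ↔ n ∈ S.F p.α '' B) :=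
    (eventually_all_finite (p.Alg_fin.1.subset inter_subset_left)).2 fun B hB =>
      S.eventually_mem_image_F_iff p.α_mem hζ hle hB.2
  obtain ⟨N, hN⟩ := eventually_atTop.1 ((S.eventually_mem_A_of_mem p.α_mem hζ hle).and hF)
  obtain ⟨n₀, hn₀, hgt⟩ := (S.A_inf ζ hζ).exists_gt (max p.top N)
  exact ⟨n₀, by omega, hn₀, fun n hn => hN n (by omega)⟩

theorem max'_insert_of_top_lt (p : QCond S) {n₀ : ℕ} (hgt : p.top < n₀) :
    (insert n₀ p.a).max' (p.a.insert_nonempty n₀) = n₀ := by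
  rw [Finset.max'_insert n₀ p.a p.a_ne]
  exact max_eq_left hgt.le

def extend (p : QCond S) {ζ : Ordinal} (hζ : ζ ∈ W) {n₀ : ℕ} (hgt : p.top < n₀)
    (hn₀ζ : n₀ ∈ S.A ζ) (hn₀α : n₀ ∈ S.A p.α) : QCond S where
  a := insert n₀ p.a
  f := splice p.f (S.F p.α) p.top n₀
  α := ζ
  Alg := p.Alg
  a_ne := p.a.insert_nonempty n₀
  f_seg m hm := by
    rcases Finset.mem_insert.1 hm with rfl | hm
    · exact bijOn_splice (p.f_seg _ (p.a.max'_mem p.a_ne)) (S.F_seg _ p.α_mem _ p.max_mem)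
        (S.F_seg _ p.α_mem _ hn₀α) hgt.le
    · exact (p.f_seg m hm).congr fun i hi =>
        (if_pos (lt_of_lt_of_le hi (p.le_top_of_mem hm))).symm
  f_pad i hi := by
    rw [p.max'_insert_of_top_lt hgt] at hi
    simp [splice, not_lt.2 hi, not_lt.2 (hgt.le.trans hi)]
  α_mem := hζ
  max_mem := by
    rw [p.max'_insert_of_top_lt hgt]
    exact hn₀ζ
  Alg_fin := p.Alg_fin

theorem le_extend (p : QCond S) {ζ : Ordinal} (hζ : ζ ∈ W) (hle : p.α ≤ ζ) {n₀ : ℕ}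
    (hgt : p.top < n₀) (hn₀ζ : n₀ ∈ S.A ζ)
    (hn₀ : ∀ n, n₀ ≤ n → (n ∈ S.A ζ → n ∈ S.A p.α) ∧
      ∀ B ∈ p.Alg ∩ S.Alg p.α, (n ∈ S.F ζ '' B ↔ n ∈ S.F p.α '' B)) :
    le p (p.extend hζ hgt hn₀ζ ((hn₀ n₀ le_rfl).1 hn₀ζ)) := by
  set q := p.extend hζ hgt hn₀ζ ((hn₀ n₀ le_rfl).1 hn₀ζ)
  have hqa : q.a = insert n₀ p.a := rfl
  have hqα : q.α = ζ := rfl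
  have htop : q.top = n₀ := p.max'_insert_of_top_lt hgt
  have hqa_above : ∀ x ∈ q.a, p.top ≤ x → x = p.top ∨ x = n₀ := by
    intro x hx hpx
    rcases Finset.mem_insert.1 hx with rfl | hx
    · exact Or.inr rfl
    · exact Or.inl (le_antisymm (p.le_top_of_mem hx) hpx)
  refine ⟨Finset.subset_insert _ _, ?_, fun i hi => if_pos hi, subset_rfl, hle, ?_,
    fun B hB => ⟨?_, ?_⟩⟩
  · rw [hqa, Finset.filter_insert, if_neg (not_le.2 hgt)]
    exact Finset.filter_true_of_mem fun x hx => p.le_top_of_mem hx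
  · rintro n (⟨hn, hge⟩ | ⟨hn, hna⟩)
    · exact (hn₀ n (htop ▸ hge)).1 hn
    · obtain rfl := (Finset.mem_insert.1 hn).resolve_right hna
      exact (hn₀ _ le_rfl).1 hn₀ζ
  · intro m hm n hn hpm hmn
    obtain rfl : m = p.top := (hqa_above m hm hpm).resolve_right (by
      rintro rfl
      rcases hqa_above n hn (hpm.trans hmn.le) with rfl | rfl <;> omega)
    obtain rfl : n = n₀ := (hqa_above n hn (hpm.trans hmn.le)).resolve_left (by omega)
    exact ((eqOn_splice_Ico _ _ _ _).mono inter_subset_right).image_eq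
  · intro m hm n hn hqm hmn
    rw [htop] at hqm
    rw [hqα] at hm hn ⊢
    have hA : ∀ k ∈ S.A ζ, m ≤ k → k ∈ S.A p.α := fun k hk hmk => (hn₀ k (hqm.trans hmk)).1 hk
    rw [image_inter_Ico_of_bijOn_Iio (S.F_bij ζ hζ).1 (S.F_seg ζ hζ m hm) (S.F_seg ζ hζ n hn)
        hmn.le,
      image_inter_Ico_of_bijOn_Iio (S.F_bij p.α p.α_mem).1 (S.F_seg p.α p.α_mem m (hA m hm le_rfl))
        (S.F_seg p.α p.α_mem n (hA n hn hmn.le)) hmn.le]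
    ext k
    simp only [mem_inter_iff, mem_Ico]
    exact ⟨fun ⟨hk, hmk, hkn⟩ => ⟨((hn₀ k (hqm.trans hmk)).2 B hB).1 hk, hmk, hkn⟩,
      fun ⟨hk, hmk, hkn⟩ => ⟨((hn₀ k (hqm.trans hmk)).2 B hB).2 hk, hmk, hkn⟩⟩

theorem exists_le_of_cofinal {C : Set Ordinal} (hCW : C ⊆ W) (hC : ∀ ξ ∈ W, ∃ ζ ∈ C, ξ ≤ ζ)
    (p : QCond S) : ∃ q : QCond S, q.α ∈ C ∧ le p q := by
  obtain ⟨ζ, hζC, hle⟩ := hC p.α p.α_mem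
  obtain ⟨n₀, hgt, hn₀ζ, hn₀⟩ := p.exists_threshold (hCW hζC) hle
  exact ⟨_, hζC, p.le_extend (hCW hζC) hle hgt hn₀ζ hn₀⟩

-- `f^p` is the identity from `max a^p` on, so its values below `max a^p` determine it.
def code (c : Ordinal → ℕ) (p : QCond S) : Finset ℕ × List ℕ × ℕ :=
  (p.a, (List.range p.top).map p.f, c p.α)

theorem eq_of_code_eq {C : Set Ordinal} {c : Ordinal → ℕ} (hc : InjOn c C) {p q : QCond S}
    (hp : p.α ∈ C) (hq : q.α ∈ C) (h : code c p = code c q) :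
    p.a = q.a ∧ p.f = q.f ∧ p.α = q.α := by
  simp only [code, Prod.mk.injEq] at h
  obtain ⟨ha, hf, hα⟩ := h
  rw [top_eq_of_a_eq ha, List.map_eq_map_iff] at hf
  refine ⟨ha, f_eq_of_eqOn_Iio_top ha fun i hi => hf i ?_, hc hp hq hα⟩
  exact List.mem_range.2 (top_eq_of_a_eq ha ▸ hi)

end QCond

/-- If some countable `C' ⊆ W` is cofinal in `W` then `ℚ(𝔖)` has a σ-centred
dense subset: a dense set which is a countable union of sets, each of whose
finite (nonempty) subsets has a common upper bound in `ℚ(𝔖)`. -/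
theorem sigmaCentred_of_countable_cofinal (W : Set Ordinal) (S : Tower W)
    (C' : Set Ordinal) (hsub : C' ⊆ W) (hcount : C'.Countable)
    (hcof : ∀ ξ ∈ W, ∃ ζ ∈ C', ξ ≤ ζ) :
    ∃ D : ℕ → Set (QCond S), QCond.IsDense (⋃ n, D n) ∧
      ∀ n : ℕ, ∀ P ⊆ D n, P.Finite → P.Nonempty →
        ∃ r : QCond S, ∀ p ∈ P, QCond.le p r := by
  obtain ⟨c, hc⟩ := countable_iff_exists_injOn.1 hcount
  refine ⟨fun n => {q | q.α ∈ C' ∧ Encodable.encode (QCond.code c q) = n}, fun p => ?_, ?_⟩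
  · obtain ⟨q, hq, hpq⟩ := QCond.exists_le_of_cofinal hsub hcof p
    exact ⟨q, mem_iUnion.2 ⟨_, hq, rfl⟩, hpq⟩
  · rintro n P hP hPfin ⟨p₀, hp₀⟩
    obtain ⟨𝔅, h𝔅, hP𝔅⟩ :=
      exists_isFiniteSubalgebra_superset (hPfin.biUnion fun p _ => p.Alg_fin.1)
    refine ⟨{ p₀ with Alg := 𝔅, Alg_fin := h𝔅 }, fun p hp => ?_⟩
    obtain ⟨ha, hf, hα⟩ := QCond.eq_of_code_eq hc (hP hp).1 (hP hp₀).1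
      (Encodable.encode_injective ((hP hp).2.trans (hP hp₀).2.symm))
    exact QCond.le_of_eq_of_Alg_subset ha hf hα ((subset_biUnion_of_mem hp).trans hP𝔅)
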